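/- arXiv:1711.04287 — 3 statements merged into one kernel-verified Lean document; each statement's English description precedes it below -/
import Mathlib

section
/- Let n and m be positive integers, let K : ℝ^n → ℝ and Γ : ℝ^m → ℝ be convex functions with convex conjugates K* and Γ* (taking values in ℝ ∪ {+∞}), and let E : ℝ^m → ℝ^n be a linear map. Let u ∈ ℝ^n, y ∈ ℝ^n, ζ ∈ ℝ^m, μ ∈ ℝ^m satisfy u = −Eμ and ζ = Eᵀy. Then the following are equivalent: (a) y ∈ ∂K(u) and μ ∈ ∂Γ(ζ); (b) the pair (y, ζ) minimizes K*(y') + Γ(ζ') over all pairs with ζ' = Eᵀy', the pair (u, μ) minimizes K(u') + Γ*(μ') over all pairs with u' = −Eμ', and K(u) + K*(y) + Γ(ζ) + Γ*(μ) = 0. -/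
/-!
By Fenchel–Young, `⟪y, u⟫ ≤ K u + K* y` and `⟪μ, ζ⟫ ≤ Γ ζ + Γ* μ`, with equality exactly when
`y ∈ ∂K(u)`, resp. `μ ∈ ∂Γ(ζ)`. Under the coupling `u = -Eμ`, `ζ = Eᵀy` the two inner products
cancel, so the duality gap `(K* y' + Γ ζ') + (K u' + Γ* μ')` is nonnegative on all feasible pairs,
and (a) says precisely that it vanishes at `(y, ζ)`, `(u, μ)`. Since the gap is nonnegative
everywhere, a zero gap makes both problems optimal there.
-/

open Set

/-- The Fenchel–Legendre convex conjugate, with values in `EReal = ℝ ∪ {±∞}`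
(for a real-valued `f` it only takes values in `ℝ ∪ {+∞}`). -/
noncomputable def fenchelConj {N : ℕ} (f : EuclideanSpace ℝ (Fin N) → ℝ)
    (y : EuclideanSpace ℝ (Fin N)) : EReal :=
  ⨆ x : EuclideanSpace ℝ (Fin N), (((inner ℝ y x : ℝ) - f x : ℝ) : EReal)

/-- The subdifferential of `f` at `x`. -/
def subdiff {N : ℕ} (f : EuclideanSpace ℝ (Fin N) → ℝ)
    (x : EuclideanSpace ℝ (Fin N)) : Set (EuclideanSpace ℝ (Fin N)) :=
  {v | ∀ z, f x + (inner ℝ v (z - x) : ℝ) ≤ f z}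

open scoped RealInnerProductSpace

namespace EReal

theorem add_eq_coe_add_iff {a b : ℝ} {A B : EReal} (ha : (a : EReal) ≤ A)
    (hb : (b : EReal) ≤ B) :
    A + B = a + b ↔ A = a ∧ B = b := by
  refine ⟨fun h => ?_, fun ⟨hA, hB⟩ => by rw [hA, hB]⟩
  have hA_bot : A ≠ ⊥ := ne_bot_of_le_ne_bot (coe_ne_bot a) ha
  have hB_bot : B ≠ ⊥ := ne_bot_of_le_ne_bot (coe_ne_bot b) hb
  have hA_top : A ≠ ⊤ := by
    rintro rfl
    rw [top_add_of_ne_bot hB_bot, ← coe_add] at h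
    exact coe_ne_top _ h.symm
  have hB_top : B ≠ ⊤ := by
    rintro rfl
    rw [add_top_of_ne_bot hA_bot, ← coe_add] at h
    exact coe_ne_top _ h.symm
  lift A to ℝ using ⟨hA_top, hA_bot⟩
  lift B to ℝ using ⟨hB_top, hB_bot⟩
  norm_cast at h ha hb ⊢
  constructor <;> linarith

theorem le_of_add_eq_zero_of_nonneg_add {x y z : EReal} (hxy : x + y = 0) (hzy : 0 ≤ z + y) :
    x ≤ z := by
  have hx_bot : x ≠ ⊥ := by rintro rfl; simp at hxy
  have hy_bot : y ≠ ⊥ := by rintro rfl; simp at hxy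
  have hy_top : y ≠ ⊤ := by rintro rfl; simp [add_top_of_ne_bot hx_bot] at hxy
  lift y to ℝ using ⟨hy_top, hy_bot⟩
  exact (addLECancellable_coe y).add_le_add_iff_right.1 (hxy ▸ hzy)

end EReal

section FenchelYoung

variable {N : ℕ} (f : EuclideanSpace ℝ (Fin N) → ℝ) (x v : EuclideanSpace ℝ (Fin N))

theorem inner_le_add_fenchelConj : ((⟪v, x⟫ : ℝ) : EReal) ≤ f x + fenchelConj f v :=
  calc ((⟪v, x⟫ : ℝ) : EReal) = f x + ((⟪v, x⟫ - f x : ℝ) : EReal) := by norm_cast; ring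
    _ ≤ f x + fenchelConj f v := by
      gcongr
      exact le_iSup (fun z => ((⟪v, z⟫ - f z : ℝ) : EReal)) x

theorem mem_subdiff_iff_add_fenchelConj_le :
    v ∈ subdiff f x ↔ (f x : EReal) + fenchelConj f v ≤ ⟪v, x⟫ := by
  have hsplit : ((⟪v, x⟫ : ℝ) : EReal) = f x + ((⟪v, x⟫ - f x : ℝ) : EReal) := by
    norm_cast; ring
  rw [hsplit, (EReal.addLECancellable_coe (f x)).add_le_add_iff_left, fenchelConj, iSup_le_iff]
  refine forall_congr' fun z => ?_
  rw [EReal.coe_le_coe_iff, inner_sub_right]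
  constructor <;> intro h <;> linarith

theorem mem_subdiff_iff_add_fenchelConj_eq :
    v ∈ subdiff f x ↔ (f x : EReal) + fenchelConj f v = ⟪v, x⟫ := by
  rw [mem_subdiff_iff_add_fenchelConj_le]
  exact ⟨fun h => le_antisymm h (inner_le_add_fenchelConj f x v), le_of_eq⟩

end FenchelYoung

theorem mem_subdiff_and_mem_subdiff_iff {N M : ℕ} (f : EuclideanSpace ℝ (Fin N) → ℝ)
    (g : EuclideanSpace ℝ (Fin M) → ℝ) {x v : EuclideanSpace ℝ (Fin N)}
    {z w : EuclideanSpace ℝ (Fin M)} (h : ⟪v, x⟫ + ⟪w, z⟫ = 0) :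
    v ∈ subdiff f x ∧ w ∈ subdiff g z ↔
      (f x : EReal) + fenchelConj f v + g z + fenchelConj g w = 0 := by
  rw [mem_subdiff_iff_add_fenchelConj_eq, mem_subdiff_iff_add_fenchelConj_eq,
    ← EReal.add_eq_coe_add_iff (inner_le_add_fenchelConj f x v) (inner_le_add_fenchelConj g z w),
    ← EReal.coe_add, h, EReal.coe_zero, ← add_assoc]

theorem inner_neg_apply_add_inner_adjoint_apply {F G : Type*} [NormedAddCommGroup F]
    [InnerProductSpace ℝ F] [FiniteDimensional ℝ F] [NormedAddCommGroup G]
    [InnerProductSpace ℝ G] [FiniteDimensional ℝ G] (A : G →ₗ[ℝ] F) (y : F) (μ : G) :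
    ⟪y, -A μ⟫ + ⟪μ, LinearMap.adjoint A y⟫ = 0 := by
  rw [inner_neg_right, LinearMap.adjoint_inner_right, real_inner_comm, neg_add_cancel]

theorem fenchel_weak_duality {N M : ℕ} (f : EuclideanSpace ℝ (Fin N) → ℝ)
    (g : EuclideanSpace ℝ (Fin M) → ℝ)
    (A : EuclideanSpace ℝ (Fin M) →ₗ[ℝ] EuclideanSpace ℝ (Fin N))
    (y : EuclideanSpace ℝ (Fin N)) (μ : EuclideanSpace ℝ (Fin M)) :
    0 ≤ (fenchelConj f y + g (LinearMap.adjoint A y)) + (f (-A μ) + fenchelConj g μ) :=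
  calc (0 : EReal) = ((⟪y, -A μ⟫ + ⟪μ, LinearMap.adjoint A y⟫ : ℝ) : EReal) := by
        rw [inner_neg_apply_add_inner_adjoint_apply, EReal.coe_zero]
    _ ≤ (f (-A μ) + fenchelConj f y) + (g (LinearMap.adjoint A y) + fenchelConj g μ) := by
        rw [EReal.coe_add]
        exact add_le_add (inner_le_add_fenchelConj _ _ _) (inner_le_add_fenchelConj _ _ _)
    _ = _ := by ac_rfl

theorem stmt_2_general (n m : ℕ)
    (K : EuclideanSpace ℝ (Fin n) → ℝ) (Γ : EuclideanSpace ℝ (Fin m) → ℝ)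
    (E : EuclideanSpace ℝ (Fin m) →ₗ[ℝ] EuclideanSpace ℝ (Fin n))
    (u y : EuclideanSpace ℝ (Fin n)) (ζ μ : EuclideanSpace ℝ (Fin m))
    (hu : u = -(E μ)) (hζ : ζ = LinearMap.adjoint E y) :
    (y ∈ subdiff K u ∧ μ ∈ subdiff Γ ζ) ↔
      ((∀ (y' : EuclideanSpace ℝ (Fin n)) (ζ' : EuclideanSpace ℝ (Fin m)),
          ζ' = LinearMap.adjoint E y' →
          fenchelConj K y + (Γ ζ : EReal) ≤ fenchelConj K y' + (Γ ζ' : EReal)) ∧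
       (∀ (u' : EuclideanSpace ℝ (Fin n)) (μ' : EuclideanSpace ℝ (Fin m)),
          u' = -(E μ') →
          (K u : EReal) + fenchelConj Γ μ ≤ (K u' : EReal) + fenchelConj Γ μ') ∧
       (K u : EReal) + fenchelConj K y + (Γ ζ : EReal) + fenchelConj Γ μ = 0) := by
  subst hu hζ
  rw [mem_subdiff_and_mem_subdiff_iff K Γ (inner_neg_apply_add_inner_adjoint_apply E y μ)]
  refine ⟨fun hgap => ⟨?_, ?_, hgap⟩, fun h => h.2.2⟩
  · rintro y' _ rfl
    refine EReal.le_of_add_eq_zero_of_nonneg_add ?_ (fenchel_weak_duality K Γ E y' μ)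
    rw [← hgap]; ac_rfl
  · rintro _ μ' rfl
    refine EReal.le_of_add_eq_zero_of_nonneg_add (y := fenchelConj K y + Γ (LinearMap.adjoint E y))
      ?_ (by rw [add_comm]; exact fenchel_weak_duality K Γ E y μ')
    rw [← hgap]; ac_rfl

/-- characterization of closed-loop steady-states as dual optimal
solutions of the optimal potential problem (OPP) and the optimal flow problem (OFP). -/
theorem stmt_2 (n m : ℕ) (hn : 0 < n) (hm : 0 < m)
    (K : EuclideanSpace ℝ (Fin n) → ℝ) (Γ : EuclideanSpace ℝ (Fin m) → ℝ)
    (hK : ConvexOn ℝ univ K) (hΓ : ConvexOn ℝ univ Γ)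
    (E : EuclideanSpace ℝ (Fin m) →ₗ[ℝ] EuclideanSpace ℝ (Fin n))
    (u y : EuclideanSpace ℝ (Fin n)) (ζ μ : EuclideanSpace ℝ (Fin m))
    (hu : u = -(E μ)) (hζ : ζ = LinearMap.adjoint E y) :
    (y ∈ subdiff K u ∧ μ ∈ subdiff Γ ζ) ↔
      ((∀ (y' : EuclideanSpace ℝ (Fin n)) (ζ' : EuclideanSpace ℝ (Fin m)),
          ζ' = LinearMap.adjoint E y' →
          fenchelConj K y + (Γ ζ : EReal) ≤ fenchelConj K y' + (Γ ζ' : EReal)) ∧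
       (∀ (u' : EuclideanSpace ℝ (Fin n)) (μ' : EuclideanSpace ℝ (Fin m)),
          u' = -(E μ') →
          (K u : EReal) + fenchelConj Γ μ ≤ (K u' : EReal) + fenchelConj Γ μ') ∧
       (K u : EReal) + fenchelConj K y + (Γ ζ : EReal) + fenchelConj Γ μ = 0) :=
  stmt_2_general n m K Γ E u y ζ μ hu hζ
end

section
/- Let ψ : ℝ^n → ℝ be a differentiable strictly convex function satisfying ψ(x)/‖x‖ → ∞ as ‖x‖ → ∞, let J be a real skew-symmetric n × n matrix, and let b ∈ ℝ^n. Then there exists a unique x₀ ∈ ℝ^n such that ∇ψ(x₀) − J x₀ = b. -/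
/-!
The gradient of a strictly convex superlinear `ψ` is a bijection whose inverse `g` is continuous,
and `ψ* p = ⟪p, g p⟫ - ψ (g p)` is the convex conjugate, with `∇ψ* = g`. The function
`h x = ψ x + ψ* (J x + b) - ⟪b, x⟫` is superlinear, so it has a minimiser `z`. With
`y = g (J z + b)`, the first-order condition reads `∇ψ z = J y + b` (as `Jᵀ = -J`), while
`∇ψ y = J z + b`. Hence `⟪∇ψ z - ∇ψ y, z - y⟫ = -⟪J (z - y), z - y⟫ = 0`, and strict monotonicity
of `∇ψ` forces `z = y`, which is then a solution. Uniqueness is strict monotonicity again.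
-/

open Set Filter InnerProductSpace Bornology
open scoped Topology RealInnerProductSpace Gradient

theorem tendsto_sub_mul_norm_of_superlinear {F : Type*} [NormedAddCommGroup F] {f : F → ℝ}
    (hf : Tendsto (fun x => f x / ‖x‖) (cobounded F) atTop) (c : ℝ) :
    Tendsto (fun x => f x - c * ‖x‖) (cobounded F) atTop := by
  have hprod : Tendsto (fun x => ‖x‖ * (f x / ‖x‖ - c)) (cobounded F) atTop :=
    tendsto_norm_cobounded_atTop.atTop_mul_atTop₀ (tendsto_atTop_add_const_right _ (-c) hf)
  refine hprod.congr' ?_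
  filter_upwards [tendsto_norm_cobounded_atTop.eventually_gt_atTop 0] with x hx
  field_simp

theorem exists_forall_le_of_tendsto_cobounded {X : Type*} [PseudoMetricSpace X] [ProperSpace X]
    [Nonempty X] {f : X → ℝ} (hf : Continuous f)
    (hlim : Tendsto f (cobounded X) atTop) : ∃ z, ∀ x, f z ≤ f x :=
  hf.exists_forall_le (Metric.cobounded_eq_cocompact (α := X) ▸ hlim)

variable {E : Type*} [NormedAddCommGroup E] [InnerProductSpace ℝ E] {ψ : E → ℝ} {x y z p : E}

/-- For convex `ψ` and a right inverse `g` of `∇ ψ`, this is the Fenchel conjugate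
`ψ* p = ⨆ x, ⟪p, x⟫ - ψ x`: the supremum is attained at `x = g p`. -/
def legendreTransform (ψ : E → ℝ) (g : E → E) (p : E) : ℝ :=
  ⟪p, g p⟫ - ψ (g p)

section CompleteSpace

variable [CompleteSpace E]

theorem IsLocalMin.hasGradientAt_eq_zero {f : E → ℝ} {f' : E} (h : IsLocalMin f x)
    (hf : HasGradientAt f f' x) : f' = 0 :=
  (toDual ℝ E).map_eq_zero_iff.1 (h.hasFDerivAt_eq_zero hf.hasFDerivAt)

theorem gradient_eq_of_forall_add_inner_le (hd : DifferentiableAt ℝ ψ z)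
    (h : ∀ x, ψ z + ⟪p, x - z⟫ ≤ ψ x) : ∇ ψ z = p := by
  have hmin : IsLocalMin (fun x => ψ x - ⟪p, x⟫) z :=
    Eventually.of_forall fun x => by have := h x; rw [inner_sub_right] at this; linarith
  have hgrad : HasGradientAt (fun x => ψ x - ⟪p, x⟫) (∇ ψ z - p) z := by
    rw [hasGradientAt_iff_hasFDerivAt, map_sub]
    exact hd.hasGradientAt.hasFDerivAt.sub (toDual ℝ E p).hasFDerivAt
  exact sub_eq_zero.1 (hmin.hasGradientAt_eq_zero hgrad)

theorem ConvexOn.add_inner_gradient_le (hψ : ConvexOn ℝ univ ψ) (hd : DifferentiableAt ℝ ψ x)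
    (y : E) : ψ x + ⟪∇ ψ x, y - x⟫ ≤ ψ y := by
  let ℓ : ℝ →ᵃ[ℝ] E := AffineMap.lineMap x y
  have hline : ConvexOn ℝ univ (ψ ∘ ℓ) := hψ.comp_affineMap ℓ
  have hder : HasDerivAt (ψ ∘ ℓ) ⟪∇ ψ x, y - x⟫ 0 := by
    have hψ' : HasFDerivAt ψ (toDual ℝ E (∇ ψ x)) (ℓ 0) := by
      simpa [ℓ] using hd.hasGradientAt.hasFDerivAt
    simpa using hψ'.comp_hasDerivAt (0 : ℝ) AffineMap.hasDerivAt_lineMap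
  have := hline.le_slope_of_hasDerivAt trivial trivial zero_lt_one hder
  simp only [slope_def_field, Function.comp_apply, ℓ, AffineMap.lineMap_apply_zero,
    AffineMap.lineMap_apply_one, sub_zero, div_one] at this
  linarith

theorem StrictConvexOn.add_inner_gradient_lt (hψ : StrictConvexOn ℝ univ ψ)
    (hd : DifferentiableAt ℝ ψ x) (hxy : x ≠ y) : ψ x + ⟪∇ ψ x, y - x⟫ < ψ y := by
  have hmid := hψ.convexOn.add_inner_gradient_le hd ((2⁻¹ : ℝ) • x + (2⁻¹ : ℝ) • y)
  have hlt := hψ.2 trivial trivial hxy (by norm_num : (0 : ℝ) < 2⁻¹) (by norm_num : (0 : ℝ) < 2⁻¹)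
    (by norm_num)
  have hsub : (2⁻¹ : ℝ) • x + (2⁻¹ : ℝ) • y - x = (2⁻¹ : ℝ) • (y - x) := by module
  rw [hsub, real_inner_smul_right] at hmid
  simp only [smul_eq_mul] at hlt
  linarith

theorem StrictConvexOn.inner_gradient_sub_gradient_pos (hψ : StrictConvexOn ℝ univ ψ)
    (hx : DifferentiableAt ℝ ψ x) (hy : DifferentiableAt ℝ ψ y) (hxy : x ≠ y) :
    0 < ⟪∇ ψ x - ∇ ψ y, x - y⟫ := by
  have h₁ := hψ.add_inner_gradient_lt hx hxy
  have h₂ := hψ.add_inner_gradient_lt hy hxy.symm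
  have : ⟪∇ ψ x - ∇ ψ y, x - y⟫ = -⟪∇ ψ x, y - x⟫ - ⟪∇ ψ y, x - y⟫ := by
    rw [← neg_sub x y, inner_neg_right, inner_sub_left]; ring
  linarith

theorem ConvexOn.gradient_eq_of_tendsto (hψ : ConvexOn ℝ univ ψ) (hd : Differentiable ℝ ψ)
    {ι : Type*} {l : Filter ι} [l.NeBot] {u : ι → E} (hu : Tendsto u l (𝓝 z))
    (hgu : Tendsto (fun i => ∇ ψ (u i)) l (𝓝 p)) : ∇ ψ z = p := by
  refine gradient_eq_of_forall_add_inner_le (hd z) fun x => ?_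
  have hlim : Tendsto (fun i => ψ (u i) + ⟪∇ ψ (u i), x - u i⟫) l (𝓝 (ψ z + ⟪p, x - z⟫)) :=
    ((hd.continuous.tendsto z).comp hu).add (hgu.inner (tendsto_const_nhds.sub hu))
  exact le_of_tendsto' hlim fun i => hψ.add_inner_gradient_le (hd (u i)) x

theorem ConvexOn.isBounded_setOf_norm_gradient_le (hψ : ConvexOn ℝ univ ψ)
    (hd : Differentiable ℝ ψ) (hsup : Tendsto (fun x => ψ x / ‖x‖) (cobounded E) atTop)
    (C : ℝ) : IsBounded {x | ‖∇ ψ x‖ ≤ C} := by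
  refine IsBounded.subset (isBounded_compl_iff.2
    ((tendsto_sub_mul_norm_of_superlinear hsup C).eventually_gt_atTop (ψ 0))) fun x hx => ?_
  have h₀ := hψ.add_inner_gradient_le (hd x) 0
  have hC : ⟪∇ ψ x, x⟫ ≤ C * ‖x‖ :=
    (real_inner_le_norm _ _).trans (mul_le_mul_of_nonneg_right hx (norm_nonneg x))
  rw [zero_sub, inner_neg_right] at h₀
  simp only [mem_compl_iff, mem_ofPred_eq, not_lt]
  linarith

theorem ConvexOn.inner_sub_le_legendreTransform (hψ : ConvexOn ℝ univ ψ) {g : E → E}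
    (hd : DifferentiableAt ℝ ψ (g p)) (hg : ∇ ψ (g p) = p) (x : E) :
    ⟪p, x⟫ - ψ x ≤ legendreTransform ψ g p := by
  have h := hψ.add_inner_gradient_le hd x
  rw [hg, inner_sub_right] at h
  unfold legendreTransform
  linarith

theorem ConvexOn.hasGradientAt_legendreTransform (hψ : ConvexOn ℝ univ ψ)
    (hd : Differentiable ℝ ψ) {g : E → E} (hg : ∀ q, ∇ ψ (g q) = q) (hgc : ContinuousAt g p) :
    HasGradientAt (legendreTransform ψ g) (g p) p := by
  set ψs := legendreTransform ψ g
  rw [hasGradientAt_iff_isLittleO_nhds_zero, Asymptotics.isLittleO_iff]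
  intro c hc
  have hT : Tendsto (fun w => g (p + w)) (𝓝 0) (𝓝 (g p)) :=
    hgc.tendsto.comp ((continuous_const_add p).tendsto' 0 p (add_zero p))
  filter_upwards [hT (Metric.closedBall_mem_nhds _ hc)] with w hw
  -- Fenchel–Young at `p + w` and at `p` sandwiches the increment of `ψs`
  have lower := hψ.inner_sub_le_legendreTransform (hd _) (hg (p + w)) (g p)
  have upper := hψ.inner_sub_le_legendreTransform (hd _) (hg p) (g (p + w))
  have hnorm : ⟪w, g (p + w) - g p⟫ ≤ c * ‖w‖ := by
    rw [mul_comm]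
    exact (real_inner_le_norm _ _).trans
      (mul_le_mul_of_nonneg_left (by simpa [dist_eq_norm] using hw) (norm_nonneg w))
  simp only [legendreTransform, inner_add_left, inner_sub_right] at lower upper hnorm
  rw [Real.norm_eq_abs, abs_le]
  simp only [ψs, legendreTransform, inner_add_left]
  constructor <;> linarith [real_inner_comm w (g p)]

theorem HasGradientAt.comp_clm_add_const {f : E → ℝ} {f' : E} {L : E →L[ℝ] E} {b : E}
    (hf : HasGradientAt f f' (L x + b)) :
    HasGradientAt (fun x => f (L x + b)) (ContinuousLinearMap.adjoint L f') x := by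
  have hD : toDual ℝ E (ContinuousLinearMap.adjoint L f') = (toDual ℝ E f').comp L := by
    ext v
    simp only [toDual_apply_apply, ContinuousLinearMap.comp_apply,
      ContinuousLinearMap.adjoint_inner_left]
  rw [hasGradientAt_iff_hasFDerivAt, hD]
  exact hf.hasFDerivAt.comp x (L.hasFDerivAt.add_const b)

theorem ContinuousLinearMap.inner_apply_self_eq_zero_of_adjoint_eq_neg {L : E →L[ℝ] E}
    (hL : ContinuousLinearMap.adjoint L = -L) (u : E) : ⟪L u, u⟫ = 0 := by
  have h := L.adjoint_inner_left u u
  rw [hL, neg_apply, inner_neg_left] at h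
  linarith [real_inner_comm u (L u)]

theorem StrictConvexOn.eq_of_gradient_sub_gradient_eq (hψ : StrictConvexOn ℝ univ ψ)
    (hd : Differentiable ℝ ψ) {L : E →L[ℝ] E} (hL : ContinuousLinearMap.adjoint L = -L)
    (h : ∇ ψ x - ∇ ψ y = L (x - y)) : x = y := by
  by_contra hne
  have := hψ.inner_gradient_sub_gradient_pos (hd x) (hd y) hne
  rw [h, L.inner_apply_self_eq_zero_of_adjoint_eq_neg hL] at this
  exact lt_irrefl _ this

end CompleteSpace

section ProperSpace

variable [ProperSpace E]

theorem exists_gradient_eq (hd : Differentiable ℝ ψ)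
    (hsup : Tendsto (fun x => ψ x / ‖x‖) (cobounded E) atTop) (p : E) : ∃ z, ∇ ψ z = p := by
  have hlim : Tendsto (fun x => ψ x - ⟪p, x⟫) (cobounded E) atTop :=
    tendsto_atTop_mono (fun x => by linarith [real_inner_le_norm p x])
      (tendsto_sub_mul_norm_of_superlinear hsup ‖p‖)
  obtain ⟨z, hz⟩ := exists_forall_le_of_tendsto_cobounded (f := fun x => ψ x - ⟪p, x⟫)
    (hd.continuous.sub (continuous_const.inner continuous_id)) hlim
  refine ⟨z, gradient_eq_of_forall_add_inner_le (hd z) fun x => ?_⟩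
  have := hz x
  rw [inner_sub_right]
  linarith

theorem StrictConvexOn.continuous_of_gradient_comp_eq
    (hψ : StrictConvexOn ℝ univ ψ) (hd : Differentiable ℝ ψ)
    (hsup : Tendsto (fun x => ψ x / ‖x‖) (cobounded E) atTop) {g : E → E}
    (hg : ∀ q, ∇ ψ (g q) = q) : Continuous g := by
  refine continuous_iff_continuousAt.2 fun p => ?_
  have hK : IsCompact (closure {x | ‖∇ ψ x‖ ≤ ‖p‖ + 1}) :=
    (hψ.convexOn.isBounded_setOf_norm_gradient_le hd hsup _).isCompact_closure
  refine hK.tendsto_nhds_of_unique_mapClusterPt ?_ fun z _ hz => ?_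
  · filter_upwards [Metric.closedBall_mem_nhds p one_pos] with q hq
    refine subset_closure ?_
    simp only [mem_ofPred_eq, hg]
    exact norm_le_of_mem_closedBall hq
  · obtain ⟨u, hgu, hu⟩ := hz.exists_seq_tendsto
    have hz : ∇ ψ z = p :=
      hψ.convexOn.gradient_eq_of_tendsto hd hgu (by simpa [Function.comp_def, hg] using hu)
    by_contra hne
    have := hψ.inner_gradient_sub_gradient_pos (hd z) (hd (g p)) hne
    rw [hz, hg, sub_self, inner_zero_left] at this
    exact lt_irrefl _ this

theorem StrictConvexOn.existsUnique_gradient_sub_eq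
    (hψ : StrictConvexOn ℝ univ ψ) (hd : Differentiable ℝ ψ)
    (hsup : Tendsto (fun x => ψ x / ‖x‖) (cobounded E) atTop) {L : E →L[ℝ] E}
    (hL : ContinuousLinearMap.adjoint L = -L) (b : E) : ∃! x, ∇ ψ x - L x = b := by
  choose g hg using exists_gradient_eq hd hsup
  have hgc : Continuous g := hψ.continuous_of_gradient_comp_eq hd hsup hg
  have hψs : ∀ p, HasGradientAt (legendreTransform ψ g) (g p) p := fun _ =>
    hψ.convexOn.hasGradientAt_legendreTransform hd hg hgc.continuousAt
  set h : E → ℝ := fun x => ψ x + legendreTransform ψ g (L x + b) - ⟪b, x⟫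
  have hcont : Continuous h :=
    (hd.continuous.add ((continuous_iff_continuousAt.2 fun p => (hψs p).continuousAt).comp
      (L.continuous.add continuous_const))).sub (continuous_const.inner continuous_id)
  have hlim : Tendsto h (cobounded E) atTop := by
    refine tendsto_atTop_mono (fun x => ?_) (tendsto_atTop_add_const_right _ (-ψ 0)
      (tendsto_sub_mul_norm_of_superlinear hsup ‖b‖))
    have := hψ.convexOn.inner_sub_le_legendreTransform (hd _) (hg (L x + b)) 0
    simp only [inner_zero_right, zero_sub] at this
    linarith [real_inner_le_norm b x]
  obtain ⟨z, hz⟩ := exists_forall_le_of_tendsto_cobounded hcont hlim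
  set y := g (L z + b)
  have hgrad : HasGradientAt h (∇ ψ z + ContinuousLinearMap.adjoint L y - b) z := by
    rw [hasGradientAt_iff_hasFDerivAt, map_sub, map_add]
    exact ((hd z).hasGradientAt.hasFDerivAt.add (hψs _).comp_clm_add_const.hasFDerivAt).sub
      (toDual ℝ E b).hasFDerivAt
  have hz_grad : ∇ ψ z = L y + b := by
    have := IsLocalMin.hasGradientAt_eq_zero (Eventually.of_forall hz) hgrad
    rw [hL, neg_apply] at this
    rw [← sub_eq_zero, ← this]
    abel
  have hzy : z = y :=
    hψ.eq_of_gradient_sub_gradient_eq hd (L := -L) (by simp [hL])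
      (by rw [hz_grad, hg, neg_apply, map_sub]; abel)
  have hsol : ∇ ψ z - L z = b := by rw [hz_grad, ← hzy]; abel
  exact ⟨z, hsol, fun x hx => hψ.eq_of_gradient_sub_gradient_eq hd hL
    (by rw [map_sub, sub_eq_sub_iff_sub_eq_sub, hx, hsol])⟩

end ProperSpace

theorem stmt_7_general (n : ℕ)
    (ψ : EuclideanSpace ℝ (Fin n) → ℝ)
    (hdiff : Differentiable ℝ ψ)
    (hconv : StrictConvexOn ℝ univ ψ)
    (hcoercive : Tendsto (fun x : EuclideanSpace ℝ (Fin n) => ψ x / ‖x‖)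
      (Bornology.cobounded _) atTop)
    (J : Matrix (Fin n) (Fin n) ℝ) (hJ : J.transpose = -J)
    (b : EuclideanSpace ℝ (Fin n)) :
    ∃! x₀ : EuclideanSpace ℝ (Fin n),
      gradient ψ x₀ - Matrix.toEuclideanLin J x₀ = b := by
  have hJ' : ContinuousLinearMap.adjoint (Matrix.toEuclideanCLM (𝕜 := ℝ) J)
      = -Matrix.toEuclideanCLM (𝕜 := ℝ) J := by
    rw [← ContinuousLinearMap.star_eq_adjoint, ← map_star, Matrix.star_eq_conjTranspose,
      Matrix.conjTranspose_eq_transpose_of_trivial, hJ, map_neg]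
  exact hconv.existsUnique_gradient_sub_eq hdiff hcoercive hJ' b

/-- for a differentiable strictly convex superlinear `ψ`, a
skew-symmetric `J` and `b ∈ ℝⁿ`, there is a unique `x₀` with `∇ψ(x₀) − Jx₀ = b`. -/
theorem stmt_7 (n : ℕ) (hn : 0 < n)
    (ψ : EuclideanSpace ℝ (Fin n) → ℝ)
    (hdiff : Differentiable ℝ ψ)
    (hconv : StrictConvexOn ℝ univ ψ)
    (hcoercive : Tendsto (fun x : EuclideanSpace ℝ (Fin n) => ψ x / ‖x‖)
      (Bornology.cobounded _) atTop)
    (J : Matrix (Fin n) (Fin n) ℝ) (hJ : J.transpose = -J)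
    (b : EuclideanSpace ℝ (Fin n)) :
    ∃! x₀ : EuclideanSpace ℝ (Fin n),
      gradient ψ x₀ - Matrix.toEuclideanLin J x₀ = b :=
  stmt_7_general n ψ hdiff hconv hcoercive J hJ b
end

section
/- Let ψ : ℝ^n → ℝ be a continuously differentiable strictly convex function satisfying ψ(x)/‖x‖ → ∞ as ‖x‖ → ∞, let J be a real skew-symmetric n × n matrix, and let b ∈ ℝ^n. Let x₀ ∈ ℝ^n be the (unique) point with ∇ψ(x₀) − J x₀ = b. Then every differentiable curve x : [0, ∞) → ℝ^n satisfying x'(t) = −∇ψ(x(t)) + J x(t) + b for all t ≥ 0 converges to x₀, i.e. x(t) → x₀ as t → ∞. -/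
/-!
With `F y = -∇ψ y + J y + b`, the identity `∇ψ x₀ - J x₀ = b` and the skew-symmetry of `J` give
`⟪y - x₀, F y⟫ = -⟪∇ψ y - ∇ψ x₀, y - x₀⟫`, which is negative for `y ≠ x₀` because the gradient
of a strictly convex function is strictly monotone. Hence `‖x t - x₀‖²` is a Lyapunov function:
it is nonincreasing, and if it stayed above `ε²` the trajectory would remain in a compact annulus
around `x₀`, where it decreases at a uniform positive rate, which is impossible.
-/

open Set Filter Topology Matrix

theorem StrictConvexOn.comp_affineMap {𝕜 E F β : Type*} [Field 𝕜] [LinearOrder 𝕜]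
    [IsStrictOrderedRing 𝕜] [AddCommGroup E] [AddCommGroup F] [AddCommMonoid β] [PartialOrder β]
    [Module 𝕜 E] [Module 𝕜 F] [SMul 𝕜 β] {f : F → β} {g : E →ᵃ[𝕜] F}
    (hg : Function.Injective g) {s : Set F} (hf : StrictConvexOn 𝕜 s f) :
    StrictConvexOn 𝕜 (g ⁻¹' s) (f ∘ g) :=
  ⟨hf.1.affine_preimage _, fun x hx y hy hxy a b ha hb hab =>
    calc
      (f ∘ g) (a • x + b • y) = f (a • g x + b • g y) := by
        rw [Function.comp_apply, Convex.combo_affine_apply hab]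
      _ < a • f (g x) + b • f (g y) := hf.2 hx hy (hg.ne hxy) ha hb hab⟩

section Gradient

variable {E : Type*} [NormedAddCommGroup E] [InnerProductSpace ℝ E] [CompleteSpace E]
  {f : E → ℝ} {y z g g' : E}

theorem StrictConvexOn.inner_lt_sub_of_hasGradientAt (hf : StrictConvexOn ℝ univ f)
    (hg : HasGradientAt f g y) (hyz : y ≠ z) : inner ℝ g (z - y) < f z - f y := by
  have hline : StrictConvexOn ℝ univ (f ∘ AffineMap.lineMap (k := ℝ) y z) :=
    hf.comp_affineMap (AffineMap.lineMap_injective ℝ hyz)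
  have hderiv : HasDerivAt (f ∘ AffineMap.lineMap (k := ℝ) y z) (inner ℝ g (z - y)) 0 := by
    have hf' := hg.hasFDerivAt
    rw [← AffineMap.lineMap_apply_zero y z (k := ℝ)] at hf'
    simpa using hf'.comp_hasDerivAt (0 : ℝ) AffineMap.hasDerivAt_lineMap
  simpa [slope_def_field] using
    hline.lt_slope_of_hasDerivAt (mem_univ 0) (mem_univ 1) one_pos hderiv

theorem StrictConvexOn.inner_sub_pos_of_hasGradientAt (hf : StrictConvexOn ℝ univ f)
    (hg : HasGradientAt f g y) (hg' : HasGradientAt f g' z) (hyz : y ≠ z) :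
    0 < inner ℝ (g - g') (y - z) := by
  have h₁ := hf.inner_lt_sub_of_hasGradientAt hg hyz
  have h₂ := hf.inner_lt_sub_of_hasGradientAt hg' hyz.symm
  rw [← neg_sub y z, inner_neg_right] at h₁
  rw [inner_sub_left]
  linarith

end Gradient

theorem Matrix.inner_toEuclideanLin_self_of_transpose_eq_neg {ι : Type*} [Fintype ι]
    [DecidableEq ι] {J : Matrix ι ι ℝ} (hJ : Jᵀ = -J) (v : EuclideanSpace ℝ ι) :
    inner ℝ (Matrix.toEuclideanLin J v) v = 0 := by
  have hadj : LinearMap.adjoint (Matrix.toEuclideanLin J) = -Matrix.toEuclideanLin J := by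
    rw [← Matrix.toEuclideanLin_conjTranspose_eq_adjoint,
      Matrix.conjTranspose_eq_transpose_of_trivial, hJ, map_neg]
  have h := LinearMap.adjoint_inner_right (Matrix.toEuclideanLin J) v v
  rw [hadj, LinearMap.neg_apply, inner_neg_right, real_inner_comm] at h
  linarith

theorem sub_le_mul_sub_of_hasDerivAt_le {f f' : ℝ → ℝ} {a C : ℝ}
    (hf : ∀ t, a ≤ t → HasDerivAt f (f' t) t) (hC : ∀ t, a ≤ t → f' t ≤ C) {s t : ℝ}
    (has : a ≤ s) (hst : s ≤ t) : f t - f s ≤ C * (t - s) := by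
  refine (convex_Ici a).image_sub_le_mul_sub_of_deriv_le
    (fun u hu => (hf u hu).continuousAt.continuousWithinAt)
    (fun u hu => (hf u (interior_subset hu)).differentiableAt.differentiableWithinAt)
    (fun u hu => ?_) s has t (has.trans hst) hst
  rw [(hf u (interior_subset hu)).deriv]
  exact hC u (interior_subset hu)

theorem exists_neg_of_hasDerivAt_le_neg {f f' : ℝ → ℝ} {c : ℝ} (hc : c < 0)
    (hf : ∀ t, 0 ≤ t → HasDerivAt f (f' t) t) (hf' : ∀ t, 0 ≤ t → f' t ≤ c) :
    ∃ t, 0 ≤ t ∧ f t < 0 := by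
  have hT : 0 ≤ |f 0| / -c + 1 := by have := neg_pos.2 hc; positivity
  refine ⟨_, hT, ?_⟩
  have hdecr := sub_le_mul_sub_of_hasDerivAt_le hf hf' le_rfl hT
  have hcT : c * (|f 0| / -c + 1 - 0) = -|f 0| + c := by
    field_simp [hc.ne]
    ring
  linarith [le_abs_self (f 0)]

theorem tendsto_atTop_of_hasDerivAt_of_inner_neg {E : Type*} [NormedAddCommGroup E]
    [InnerProductSpace ℝ E] [ProperSpace E] {F : E → E} (hF : Continuous F)
    {x₀ : E} (hFx₀ : ∀ y ≠ x₀, inner ℝ (y - x₀) (F y) < 0) {x : ℝ → E}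
    (hx : ∀ t, 0 ≤ t → HasDerivAt x (F (x t)) t) : Tendsto x atTop (𝓝 x₀) := by
  set V : ℝ → ℝ := fun t => ‖x t - x₀‖ ^ 2
  have hV : ∀ t, 0 ≤ t → HasDerivAt V (2 * inner ℝ (x t - x₀) (F (x t))) t := fun t ht =>
    ((hx t ht).sub_const x₀).norm_sq
  have hFx₀_le : ∀ y, inner ℝ (y - x₀) (F y) ≤ 0 := fun y => by
    rcases eq_or_ne y x₀ with rfl | hy
    · simp
    · exact (hFx₀ y hy).le
  have hV_anti : ∀ s t, 0 ≤ s → s ≤ t → ‖x t - x₀‖ ≤ ‖x s - x₀‖ := fun s t hs hst => by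
    have := sub_le_mul_sub_of_hasDerivAt_le (C := 0) hV
      (fun u _ => by linarith [hFx₀_le (x u)]) hs hst
    exact (sq_le_sq₀ (norm_nonneg _) (norm_nonneg _)).1 (by linarith)
  rw [Metric.tendsto_atTop]
  intro ε hε
  by_contra! hnot
  have hfar : ∀ t, 0 ≤ t → ε ≤ ‖x t - x₀‖ := fun t ht => by
    by_contra! hT
    obtain ⟨u, htu, hu⟩ := hnot t
    rw [dist_eq_norm] at hu
    linarith [hV_anti t u ht htu]
  -- On the compact annulus visited by the trajectory, `V` decreases at a uniform rate.
  set K := Metric.closedBall x₀ ‖x 0 - x₀‖ \ Metric.ball x₀ ε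
  have hxK : ∀ t, 0 ≤ t → x t ∈ K := fun t ht =>
    ⟨by simpa [dist_eq_norm] using hV_anti 0 t le_rfl ht,
      by simpa [dist_eq_norm] using hfar t ht⟩
  have hcont : Continuous fun y => inner ℝ (y - x₀) (F y) := by fun_prop
  obtain ⟨y₀, hy₀K, hy₀max⟩ := ((isCompact_closedBall _ _).diff Metric.isOpen_ball).exists_isMaxOn
    ⟨x 0, hxK 0 le_rfl⟩ hcont.continuousOn
  have hy₀ : y₀ ≠ x₀ := by
    rintro rfl
    simp [hε] at hy₀K
  obtain ⟨T, -, hT⟩ := exists_neg_of_hasDerivAt_le_neg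
    (by linarith [hFx₀ y₀ hy₀] : 2 * inner ℝ (y₀ - x₀) (F y₀) < 0) hV
    (fun u hu => by linarith [isMaxOn_iff.1 hy₀max (x u) (hxK u hu)])
  exact (sq_nonneg _).not_gt hT

theorem stmt_8_general (n : ℕ)
    (ψ : EuclideanSpace ℝ (Fin n) → ℝ)
    (hsmooth : ContDiff ℝ 1 ψ)
    (hconv : StrictConvexOn ℝ univ ψ)
    (J : Matrix (Fin n) (Fin n) ℝ) (hJ : J.transpose = -J)
    (b : EuclideanSpace ℝ (Fin n))
    (x₀ : EuclideanSpace ℝ (Fin n))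
    (hx₀ : gradient ψ x₀ - Matrix.toEuclideanLin J x₀ = b)
    (x : ℝ → EuclideanSpace ℝ (Fin n))
    (hode : ∀ t : ℝ, 0 ≤ t →
      HasDerivAt x (-gradient ψ (x t) + Matrix.toEuclideanLin J (x t) + b) t) :
    Tendsto x atTop (nhds x₀) := by
  have hgrad : ∀ y, HasGradientAt ψ (gradient ψ y) y := fun y =>
    (hsmooth.differentiable one_ne_zero y).hasGradientAt
  have hgrad_cont : Continuous (gradient ψ) :=
    (InnerProductSpace.toDual ℝ _).symm.continuous.comp (hsmooth.continuous_fderiv one_ne_zero)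
  refine tendsto_atTop_of_hasDerivAt_of_inner_neg
    (F := fun y => -gradient ψ y + Matrix.toEuclideanLin J y + b) ?_ (fun y hy => ?_) hode
  · have := (Matrix.toEuclideanLin J).continuous_of_finiteDimensional
    fun_prop
  · have hF : -gradient ψ y + Matrix.toEuclideanLin J y + b
      = -(gradient ψ y - gradient ψ x₀) + Matrix.toEuclideanLin J (y - x₀) := by
      rw [← hx₀, map_sub]
      abel
    rw [hF, inner_add_right, inner_neg_right, real_inner_comm (Matrix.toEuclideanLin J _),
      Matrix.inner_toEuclideanLin_self_of_transpose_eq_neg hJ, real_inner_comm]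
    linarith [hconv.inner_sub_pos_of_hasGradientAt (hgrad y) (hgrad x₀) hy]

/-- every solution of `ẋ = −∇ψ(x) + Jx + b`, with `ψ` a `C¹` strictly
convex superlinear function and `J` skew-symmetric, converges to the unique point
`x₀` with `∇ψ(x₀) − Jx₀ = b`. -/
theorem stmt_8 (n : ℕ) (hn : 0 < n)
    (ψ : EuclideanSpace ℝ (Fin n) → ℝ)
    (hsmooth : ContDiff ℝ 1 ψ)
    (hconv : StrictConvexOn ℝ univ ψ)
    (hcoercive : Tendsto (fun x : EuclideanSpace ℝ (Fin n) => ψ x / ‖x‖)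
      (Bornology.cobounded _) atTop)
    (J : Matrix (Fin n) (Fin n) ℝ) (hJ : J.transpose = -J)
    (b : EuclideanSpace ℝ (Fin n))
    (x₀ : EuclideanSpace ℝ (Fin n))
    (hx₀ : gradient ψ x₀ - Matrix.toEuclideanLin J x₀ = b)
    (x : ℝ → EuclideanSpace ℝ (Fin n))
    (hode : ∀ t : ℝ, 0 ≤ t →
      HasDerivAt x (-gradient ψ (x t) + Matrix.toEuclideanLin J (x t) + b) t) :
    Tendsto x atTop (nhds x₀) :=
  stmt_8_general n ψ hsmooth hconv J hJ b x₀ hx₀ x hode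
end
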